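/- arXiv:0711.3483 — 8 statements merged into one kernel-verified Lean document; each statement's English description precedes it below -/
import Mathlib

section
/- Let {X_i} and {Y_i} be sequences of metric spaces and let X and Y be compact metric spaces. Assume there exist ε_i-Hausdorff approximations h_i : X_i → X and k_i : Y_i → Y with ε_i → 0. If L ≥ 0 and for every i there exists an L-Lipschitz map ψ_i : Y_i → X_i, then there exists an L-Lipschitz map Ψ : Y → X. If moreover every ψ_i is surjective, then Ψ can be chosen to be surjective. -/
/-- If compact metric spaces `X₀`, `Y₀` are Gromov–Hausdorff limits of
sequences `X i`, `Y i` (via `ε i`-Hausdorff approximations, `ε i → 0`) and there exist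
`L`-Lipschitz maps `ψ i : Y i → X i`, then there exists an `L`-Lipschitz map `Ψ : Y₀ → X₀`;
moreover if every `ψ i` is surjective then `Ψ` can be chosen surjective. -/
theorem stmt_0
    (X : ℕ → Type*) [∀ i, MetricSpace (X i)]
    (Y : ℕ → Type*) [∀ i, MetricSpace (Y i)]
    (X₀ : Type*) [MetricSpace X₀] [CompactSpace X₀]
    (Y₀ : Type*) [MetricSpace Y₀] [CompactSpace Y₀]
    (ε : ℕ → ℝ) (hε : Filter.Tendsto ε Filter.atTop (nhds 0))
    (h : ∀ i, X i → X₀)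
    (hh : ∀ i, (∀ a b : X i, |dist (h i a) (h i b) - dist a b| ≤ ε i) ∧
      ∀ x : X₀, ∃ a : X i, dist x (h i a) ≤ ε i)
    (k : ∀ i, Y i → Y₀)
    (hk : ∀ i, (∀ a b : Y i, |dist (k i a) (k i b) - dist a b| ≤ ε i) ∧
      ∀ y : Y₀, ∃ a : Y i, dist y (k i a) ≤ ε i)
    (L : ℝ) (hL : 0 ≤ L)
    (ψ : ∀ i, Y i → X i)
    (hψ : ∀ i, ∀ p q : Y i, dist (ψ i p) (ψ i q) ≤ L * dist p q) :
    (∃ Ψ : Y₀ → X₀, ∀ p q : Y₀, dist (Ψ p) (Ψ q) ≤ L * dist p q) ∧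
    ((∀ i, Function.Surjective (ψ i)) →
      ∃ Ψ : Y₀ → X₀, (∀ p q : Y₀, dist (Ψ p) (Ψ q) ≤ L * dist p q) ∧
        Function.Surjective Ψ) := by
  classical
  by_cases hY₀ : Nonempty Y₀
  case neg =>
    -- Y₀ empty: the empty map works; and X₀ must be empty in the surjective case.
    have hΨ : ∃ Ψ : Y₀ → X₀, ∀ p q : Y₀, dist (Ψ p) (Ψ q) ≤ L * dist p q := by
      refine ⟨fun y => absurd ⟨y⟩ hY₀, fun p q => absurd ⟨p⟩ hY₀⟩
    refine ⟨hΨ, fun hsurj => ?_⟩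
    obtain ⟨Ψ, hΨ'⟩ := hΨ
    refine ⟨Ψ, hΨ', fun x => ?_⟩
    obtain ⟨a, -⟩ := (hh 0).2 x
    obtain ⟨b, -⟩ := hsurj 0 a
    exact absurd ⟨k 0 b⟩ hY₀
  -- Main case: Y₀ nonempty, hence each Y i nonempty, hence each X i and X₀ nonempty.
  have hYi : ∀ i, Nonempty (Y i) := fun i => by
    obtain ⟨a, -⟩ := (hk i).2 (Classical.arbitrary Y₀); exact ⟨a⟩
  have hε0 : ∀ i, 0 ≤ ε i := fun i => by
    have := (hk i).1 (Classical.arbitrary (Y i)) (Classical.arbitrary (Y i))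
    simp only [dist_self, sub_zero] at this
    exact (abs_nonneg _).trans this
  have hX₀ : Nonempty X₀ := ⟨h 0 (ψ 0 (Classical.arbitrary (Y 0)))⟩
  set U : Ultrafilter ℕ := Filter.hyperfilter ℕ with hU
  have hUatTop : (U : Filter ℕ) ≤ Filter.atTop := Nat.hyperfilter_le_atTop
  have hεU : Filter.Tendsto ε (U : Filter ℕ) (nhds 0) := hε.mono_left hUatTop
  -- approximate lift: pick a point of `Y i` near a given point of `Y₀`
  have hlift : ∀ (i : ℕ) (y : Y₀), ∃ a : Y i, dist y (k i a) ≤ ε i := fun i y => (hk i).2 y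
  set g : ∀ i, Y₀ → Y i := fun i y => (hlift i y).choose with hg
  have hgd : ∀ i y, dist y (k i (g i y)) ≤ ε i := fun i y => (hlift i y).choose_spec
  set f : ℕ → Y₀ → X₀ := fun i y => h i (ψ i (g i y)) with hf
  -- key estimates on distances through the approximations
  have hhd : ∀ i (a b : X i), dist (h i a) (h i b) ≤ dist a b + ε i := fun i a b => by
    have := (hh i).1 a b; rw [abs_le] at this; linarith [this.2]
  have hkd : ∀ i (a b : Y i), dist a b ≤ dist (k i a) (k i b) + ε i := fun i a b => by
    have := (hk i).1 a b; rw [abs_le] at this; linarith [this.1]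
  -- `f i` is almost Lipschitz
  have hflip : ∀ i (p q : Y₀),
      dist (f i p) (f i q) ≤ L * dist p q + ((3 * L + 1) * ε i) := by
    intro i p q
    have h1 : dist (f i p) (f i q) ≤ dist (ψ i (g i p)) (ψ i (g i q)) + ε i := hhd i _ _
    have h2 : dist (ψ i (g i p)) (ψ i (g i q)) ≤ L * dist (g i p) (g i q) := hψ i _ _
    have h3 : dist (g i p) (g i q) ≤ dist (k i (g i p)) (k i (g i q)) + ε i := hkd i _ _
    have h4 : dist (k i (g i p)) (k i (g i q)) ≤ dist p q + 2 * ε i := by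
      have t1 := dist_triangle (k i (g i p)) p (k i (g i q))
      rw [dist_comm (k i (g i p)) p] at t1
      have t2 := dist_triangle p q (k i (g i q))
      linarith [hgd i p, hgd i q]
    nlinarith [dist_nonneg (x := p) (y := q), hε0 i]
  -- define Ψ as the ultrafilter limit of the `f i`
  set Ψ : Y₀ → X₀ := fun y => (U.map (fun i => f i y)).lim with hΨdef
  have hΨtendsto : ∀ y, Filter.Tendsto (fun i => f i y) (U : Filter ℕ) (nhds (Ψ y)) := by
    intro y
    have := (U.map (fun i => f i y)).le_nhds_lim
    rwa [Ultrafilter.coe_map] at this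
  have hΨlip : ∀ p q : Y₀, dist (Ψ p) (Ψ q) ≤ L * dist p q := by
    intro p q
    have hd : Filter.Tendsto (fun i => dist (f i p) (f i q)) (U : Filter ℕ)
        (nhds (dist (Ψ p) (Ψ q))) :=
      ((hΨtendsto p).dist (hΨtendsto q))
    have hrhs : Filter.Tendsto (fun i => L * dist p q + (3 * L + 1) * ε i) (U : Filter ℕ)
        (nhds (L * dist p q)) := by
      have : Filter.Tendsto (fun i => (3 * L + 1) * ε i) (U : Filter ℕ) (nhds 0) := by
        simpa using hεU.const_mul (3 * L + 1)
      simpa using (tendsto_const_nhds.add this)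
    exact le_of_tendsto_of_tendsto' hd hrhs (fun i => hflip i p q)
  refine ⟨⟨Ψ, hΨlip⟩, fun hsurj => ⟨Ψ, hΨlip, fun x => ?_⟩⟩
  -- surjectivity: given x, lift it back through the approximations
  have hax : ∀ i, ∃ a : X i, dist x (h i a) ≤ ε i := fun i => (hh i).2 x
  set a : ∀ i, X i := fun i => (hax i).choose with ha
  have had : ∀ i, dist x (h i (a i)) ≤ ε i := fun i => (hax i).choose_spec
  set b : ∀ i, Y i := fun i => (hsurj i (a i)).choose with hb
  have hbd : ∀ i, ψ i (b i) = a i := fun i => (hsurj i (a i)).choose_spec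
  set ySeq : ℕ → Y₀ := fun i => k i (b i) with hySeq
  set y : Y₀ := (U.map ySeq).lim with hy
  have hytendsto : Filter.Tendsto ySeq (U : Filter ℕ) (nhds y) := by
    have := (U.map ySeq).le_nhds_lim
    rwa [Ultrafilter.coe_map] at this
  have hdist0 : Filter.Tendsto (fun i => dist y (ySeq i)) (U : Filter ℕ) (nhds 0) := by
    have h0 : Filter.Tendsto (fun i => dist y (ySeq i)) (U : Filter ℕ)
        (nhds (dist y y)) := Filter.Tendsto.dist tendsto_const_nhds hytendsto
    simpa using h0
  -- estimate dist (f i y) x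
  have hest : ∀ i, dist (f i y) x ≤ L * (2 * ε i + dist y (ySeq i)) + 2 * ε i := by
    intro i
    have h1 : dist (f i y) (h i (a i)) ≤ dist (ψ i (g i y)) (a i) + ε i := by
      have := hhd i (ψ i (g i y)) (a i); exact this
    have h2 : dist (ψ i (g i y)) (a i) ≤ L * dist (g i y) (b i) := by
      have := hψ i (g i y) (b i); rwa [hbd i] at this
    have h3 : dist (g i y) (b i) ≤ dist (k i (g i y)) (k i (b i)) + ε i := hkd i _ _
    have h4 : dist (k i (g i y)) (k i (b i)) ≤ ε i + dist y (ySeq i) := by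
      have t1 := dist_triangle (k i (g i y)) y (ySeq i)
      rw [dist_comm (k i (g i y)) y] at t1
      have := hgd i y
      calc dist (k i (g i y)) (k i (b i)) = dist (k i (g i y)) (ySeq i) := rfl
        _ ≤ dist y (k i (g i y)) + dist y (ySeq i) := by
            have := dist_triangle (k i (g i y)) y (ySeq i)
            rw [dist_comm (k i (g i y)) y] at this; linarith
        _ ≤ ε i + dist y (ySeq i) := by linarith [hgd i y]
    have h5 : dist (h i (a i)) x ≤ ε i := by rw [dist_comm]; exact had i
    have := dist_triangle (f i y) (h i (a i)) x
    nlinarith [hε0 i, dist_nonneg (x := y) (y := ySeq i)]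
  have hfx : Filter.Tendsto (fun i => f i y) (U : Filter ℕ) (nhds x) := by
    rw [tendsto_iff_dist_tendsto_zero]
    have hrhs : Filter.Tendsto (fun i => L * (2 * ε i + dist y (ySeq i)) + 2 * ε i)
        (U : Filter ℕ) (nhds 0) := by
      have h1 : Filter.Tendsto (fun i => 2 * ε i + dist y (ySeq i)) (U : Filter ℕ)
          (nhds 0) := by
        simpa using ((hεU.const_mul 2).add hdist0)
      have h2 : Filter.Tendsto (fun i => L * (2 * ε i + dist y (ySeq i))) (U : Filter ℕ)
          (nhds 0) := by simpa using h1.const_mul L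
      simpa using h2.add (by simpa using hεU.const_mul 2)
    exact squeeze_zero (fun i => dist_nonneg) hest hrhs
  exact ⟨y, tendsto_nhds_unique (hΨtendsto y) hfx⟩
end

section
/- Let X_i be compact metric spaces and X a compact metric space, with ε_i-Hausdorff approximations f_i : X_i → X, ε_i → 0. Let A_i ⊆ X_i be nonempty compact subsets which are convex in the midpoint sense: for all x, y ∈ A_i there exists z ∈ A_i with d_{X_i}(x,z) = d_{X_i}(z,y) = d_{X_i}(x,y)/2. Then, after passing to a subsequence, there exists a nonempty compact subset A ⊆ X such that the images f_i(A_i) converge to A in the Hausdorff distance of X, and A is convex in the same midpoint sense: for all x, y ∈ A there exists z ∈ A with d_X(x,z) = d_X(z,y) = d_X(x,y)/2. -/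
open Metric TopologicalSpace Filter

/-- Midpoint-convex nonempty compact subsets `A i ⊆ X i` of compact metric
spaces Gromov–Hausdorff converging to `X₀` sub-converge (as subsets, i.e. their images under
the Hausdorff approximations converge in Hausdorff distance) to a nonempty compact
midpoint-convex subset `A₀ ⊆ X₀`. -/
theorem stmt_2
    (X : ℕ → Type*) [∀ i, MetricSpace (X i)] [∀ i, CompactSpace (X i)]
    (X₀ : Type*) [MetricSpace X₀] [CompactSpace X₀]
    (ε : ℕ → ℝ) (hε : Filter.Tendsto ε Filter.atTop (nhds 0))
    (f : ∀ i, X i → X₀)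
    (hf : ∀ i, (∀ a b : X i, |dist (f i a) (f i b) - dist a b| ≤ ε i) ∧
      ∀ x : X₀, ∃ a : X i, dist x (f i a) ≤ ε i)
    (A : ∀ i, Set (X i))
    (hAne : ∀ i, (A i).Nonempty)
    (hAcp : ∀ i, IsCompact (A i))
    (hAconv : ∀ i, ∀ x ∈ A i, ∀ y ∈ A i, ∃ z ∈ A i,
      dist x z = dist x y / 2 ∧ dist z y = dist x y / 2) :
    ∃ φ : ℕ → ℕ, StrictMono φ ∧ ∃ A₀ : Set X₀, A₀.Nonempty ∧ IsCompact A₀ ∧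
      Filter.Tendsto (fun n => Metric.hausdorffDist (f (φ n) '' A (φ n)) A₀)
        Filter.atTop (nhds 0) ∧
      ∀ x ∈ A₀, ∀ y ∈ A₀, ∃ z ∈ A₀, dist x z = dist x y / 2 ∧ dist z y = dist x y / 2 := by
  set S : ℕ → Set X₀ := fun i => f i '' A i with hSdef
  have hSne : ∀ i, (S i).Nonempty := fun i => (hAne i).image _
  set B : ℕ → NonemptyCompacts X₀ := fun i =>
    ⟨⟨closure (S i), isClosed_closure.isCompact⟩, (hSne i).closure⟩ with hBdef
  obtain ⟨K, φ, hφ, hconv⟩ := CompactSpace.tendsto_subseq B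
  -- finiteness of Hausdorff edistances
  have hfin : ∀ s t : Set X₀, s.Nonempty → t.Nonempty → EMetric.hausdorffEdist s t ≠ ⊤ :=
    fun s t hs ht => hausdorffEdist_ne_top_of_nonempty_of_bounded hs ht
      isBounded_of_compactSpace isBounded_of_compactSpace
  have hd : Tendsto (fun n => hausdorffDist (S (φ n)) (K : Set X₀)) atTop (nhds 0) := by
    have := tendsto_iff_dist_tendsto_zero.mp hconv
    convert this using 2 with n
    simp only [Function.comp, NonemptyCompacts.dist_eq, hBdef]
    exact (hausdorffDist_closure₁ (t := (K : Set X₀))).symm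
  have hεφ : Tendsto (fun n => ε (φ n)) atTop (nhds 0) := hε.comp hφ.tendsto_atTop
  have hε0 : ∀ i, 0 ≤ ε i := by
    intro i
    have h := (hf i).1 (hAne i).some (hAne i).some
    rwa [dist_self, dist_self, sub_zero, abs_zero] at h
  refine ⟨φ, hφ, (K : Set X₀), K.nonempty, K.isCompact, hd, ?_⟩
  intro x hx y hy
  -- approximation claim
  have claim : ∀ δ : ℝ, 0 < δ → ∃ w ∈ (K : Set X₀),
      dist x w ≤ dist x y / 2 + δ ∧ dist w y ≤ dist x y / 2 + δ := by
    intro δ hδ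
    have h8 : (0:ℝ) < δ / 8 := by linarith
    have h1 : ∀ᶠ n in atTop, hausdorffDist (S (φ n)) (K : Set X₀) < δ / 8 :=
      (hd.eventually (gt_mem_nhds h8))
    have h2 : ∀ᶠ n in atTop, ε (φ n) < δ / 8 := (hεφ.eventually (gt_mem_nhds h8))
    obtain ⟨n, hn1, hn2⟩ := (h1.and h2).exists
    have finKS : EMetric.hausdorffEdist (K : Set X₀) (S (φ n)) ≠ ⊤ :=
      hfin _ _ K.nonempty (hSne _)
    have finSK : EMetric.hausdorffEdist (S (φ n)) (K : Set X₀) ≠ ⊤ :=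
      hfin _ _ (hSne _) K.nonempty
    have hKS : hausdorffDist (K : Set X₀) (S (φ n)) < δ / 8 := by
      rwa [hausdorffDist_comm]
    obtain ⟨x', hx'S, hxx'⟩ := exists_dist_lt_of_hausdorffDist_lt hx hKS finKS
    obtain ⟨y', hy'S, hyy'⟩ := exists_dist_lt_of_hausdorffDist_lt hy hKS finKS
    obtain ⟨a, haA, rfl⟩ := hx'S
    obtain ⟨b, hbA, rfl⟩ := hy'S
    obtain ⟨c, hcA, hac, hcb⟩ := hAconv (φ n) a haA b hbA
    have hzS : f (φ n) c ∈ S (φ n) := ⟨c, hcA, rfl⟩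
    obtain ⟨w, hwK, hzw⟩ := exists_dist_lt_of_hausdorffDist_lt hzS hn1 finSK
    refine ⟨w, hwK, ?_, ?_⟩
    · have e1 := abs_le.mp ((hf (φ n)).1 a c)
      have e2 := abs_le.mp ((hf (φ n)).1 a b)
      have t1 : dist x w ≤ dist x (f (φ n) a) + dist (f (φ n) a) (f (φ n) c)
          + dist (f (φ n) c) w := dist_triangle4 _ _ _ _
      have t2 : dist (f (φ n) a) (f (φ n) b) ≤ dist (f (φ n) a) x + dist x y
          + dist y (f (φ n) b) := dist_triangle4 _ _ _ _
      have hax : dist (f (φ n) a) x = dist x (f (φ n) a) := dist_comm _ _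
      have hby : dist y (f (φ n) b) = dist (f (φ n) b) y := by
        rw [dist_comm]
      have hyb : dist y (f (φ n) b) ≤ δ / 8 := by
        rw [dist_comm] at hyy' ⊢; exact le_of_lt hyy'
      linarith
    · have e1 := abs_le.mp ((hf (φ n)).1 c b)
      have e2 := abs_le.mp ((hf (φ n)).1 a b)
      have t1 : dist w y ≤ dist w (f (φ n) c) + dist (f (φ n) c) (f (φ n) b)
          + dist (f (φ n) b) y := dist_triangle4 _ _ _ _
      have t2 : dist (f (φ n) a) (f (φ n) b) ≤ dist (f (φ n) a) x + dist x y
          + dist y (f (φ n) b) := dist_triangle4 _ _ _ _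
      have hwz : dist w (f (φ n) c) < δ / 8 := by rw [dist_comm]; exact hzw
      have hax : dist (f (φ n) a) x < δ / 8 := by rw [dist_comm]; exact hxx'
      have hby : dist (f (φ n) b) y < δ / 8 := by rw [dist_comm]; exact hyy'
      have hyb : dist y (f (φ n) b) < δ / 8 := by rw [dist_comm]; exact hby
      linarith
  -- take a minimizer of the max of the two distances on K
  have hg : ContinuousOn (fun z : X₀ => max (dist x z) (dist z y)) (K : Set X₀) :=
    ((continuous_const.dist continuous_id).max
      ((continuous_id.dist continuous_const))).continuousOn
  obtain ⟨z₀, hz₀K, hz₀min⟩ := K.isCompact.exists_isMinOn K.nonempty hg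
  have hz₀le : max (dist x z₀) (dist z₀ y) ≤ dist x y / 2 := by
    by_contra h
    push_neg at h
    set m := max (dist x z₀) (dist z₀ y)
    obtain ⟨w, hwK, hw1, hw2⟩ := claim ((m - dist x y / 2) / 2) (by linarith)
    have := hz₀min hwK
    simp only [m] at *
    have hm : max (dist x w) (dist w y) ≤ dist x y / 2 + (m - dist x y / 2) / 2 :=
      max_le hw1 hw2
    have : m ≤ max (dist x w) (dist w y) := hz₀min hwK
    simp only [m] at this hm h
    linarith [this.trans hm]
  have h1 : dist x z₀ ≤ dist x y / 2 := le_trans (le_max_left _ _) hz₀le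
  have h2 : dist z₀ y ≤ dist x y / 2 := le_trans (le_max_right _ _) hz₀le
  have ht : dist x y ≤ dist x z₀ + dist z₀ y := dist_triangle _ _ _
  exact ⟨z₀, hz₀K, by linarith, by linarith⟩
end

section
/- Fix constants C ≥ 0 and r > 0. Let X_i and X be metric spaces with ε_i-Hausdorff approximations h_i : X_i → X, ε_i → 0. Let A_i ⊆ X_i and A ⊆ X be nonempty subsets, each equipped with a second metric δ_i on A_i and δ on A. Suppose there are maps σ_i : A → A_i such that d_X(h_i(σ_i(a)), a) ≤ ε_i for all a ∈ A and |δ_i(σ_i(a), σ_i(b)) − δ(a,b)| ≤ ε_i for all a, b ∈ A (i.e. the subsets A_i converge to A as subsets compatibly with a Gromov-Hausdorff convergence (A_i, δ_i) → (A, δ)). If each (A_i, δ_i) is (C,2,r)-convex in X_i, i.e. for every w ∈ A_i and all x, y ∈ A_i with d_{X_i}(x,w) ≤ r and d_{X_i}(y,w) ≤ r one has δ_i(x,y) ≤ d_{X_i}(x,y) + C·d_{X_i}(x,y)³, then (A, δ) is (C,2,r/2)-convex in X: for every z ∈ A and all x, y ∈ A with d_X(x,z) ≤ r/2 and d_X(y,z)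 ≤ r/2 one has δ(x,y) ≤ d_X(x,y) + C·d_X(x,y)³. -/
/-!
Pull `x, y, z ∈ A₀` back along `σ i`. Since `h i` distorts distances by at most `ε i` and moves
`σ i a` within `ε i` of `a`, the pulled-back points are at most `3 ε i` farther apart than the
originals; so once `ε i ≤ r / 6` they lie in the `r`-ball around `σ i z`, where the convexity of
`A i` applies. Transferring `δi i` back to `δ` costs another `ε i`, and letting `i → ∞` removes
all errors.
-/

open Filter Topology Set

section

variable {X Y : Type*} [MetricSpace X] [MetricSpace Y]

/-- `(Z, δ)` is `(C,2,r)`-convex in `X`. -/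
def IsCubicConvex (C r : ℝ) (Z : Set X) (δ : X → X → ℝ) : Prop :=
  ∀ w ∈ Z, ∀ x ∈ Z, ∀ y ∈ Z, dist x w ≤ r → dist y w ≤ r → δ x y ≤ dist x y + C * dist x y ^ 3

theorem dist_le_dist_add_of_abs_dist_sub_le {f : X → Y} {ε : ℝ}
    (hf : ∀ a b, |dist (f a) (f b) - dist a b| ≤ ε) {a' b' : X} {a b : Y}
    (ha : dist (f a') a ≤ ε) (hb : dist (f b') b ≤ ε) :
    dist a' b' ≤ dist a b + 3 * ε := by
  calc dist a' b' ≤ dist (f a') (f b') + ε := by linarith [(abs_le.mp (hf a' b')).1]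
    _ ≤ dist (f a') a + dist a b + dist b (f b') + ε := by
        linarith [dist_triangle4 (f a') a b (f b')]
    _ ≤ dist a b + 3 * ε := by rw [dist_comm b]; linarith

theorem IsCubicConvex.le_of_approx {C r ε : ℝ} (hC : 0 ≤ C) {A : Set X} {δA : X → X → ℝ}
    (hA : IsCubicConvex C r A δA) {f : X → Y} (hf : ∀ a b, |dist (f a) (f b) - dist a b| ≤ ε)
    {B : Set Y} {δB : Y → Y → ℝ} {s : Y → X} (hs : MapsTo s B A)
    (hfs : ∀ a ∈ B, dist (f (s a)) a ≤ ε) (hδ : ∀ a ∈ B, ∀ b ∈ B, |δA (s a) (s b) - δB a b| ≤ ε)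
    (hεr : 6 * ε ≤ r) {x y z : Y} (hx : x ∈ B) (hy : y ∈ B) (hz : z ∈ B)
    (hxz : dist x z ≤ r / 2) (hyz : dist y z ≤ r / 2) :
    δB x y ≤ (dist x y + 3 * ε) + C * (dist x y + 3 * ε) ^ 3 + ε := by
  have hpull : ∀ a ∈ B, ∀ b ∈ B, dist (s a) (s b) ≤ dist a b + 3 * ε := fun a ha b hb =>
    dist_le_dist_add_of_abs_dist_sub_le hf (hfs a ha) (hfs b hb)
  have hconv := hA (s z) (hs hz) (s x) (hs hx) (s y) (hs hy)
    (by linarith [hpull x hx z hz]) (by linarith [hpull y hy z hz])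
  have hcube : C * dist (s x) (s y) ^ 3 ≤ C * (dist x y + 3 * ε) ^ 3 :=
    mul_le_mul_of_nonneg_left (pow_le_pow_left₀ dist_nonneg (hpull x hx y hy) 3) hC
  linarith [(abs_le.mp (hδ x hx y hy)).1, hpull x hx y hy]

end

theorem stmt_3_general
    (C r : ℝ) (hC : 0 ≤ C) (hr : 0 < r)
    (X : ℕ → Type*) [∀ i, MetricSpace (X i)]
    (X₀ : Type*) [MetricSpace X₀]
    (ε : ℕ → ℝ) (hε : Filter.Tendsto ε Filter.atTop (nhds 0))
    (h : ∀ i, X i → X₀)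
    (hh : ∀ i, (∀ a b : X i, |dist (h i a) (h i b) - dist a b| ≤ ε i) ∧
      ∀ x : X₀, ∃ a : X i, dist x (h i a) ≤ ε i)
    (A : ∀ i, Set (X i))
    (A₀ : Set X₀)
    -- the second metrics δi on A i and δ on A₀
    (δi : ∀ i, X i → X i → ℝ) (δ : X₀ → X₀ → ℝ)
    -- the subsets A i converge to A₀ compatibly with a GH-convergence (A i, δi) → (A₀, δ)
    (σ : ∀ i, X₀ → X i)
    (hσmem : ∀ i, ∀ a ∈ A₀, σ i a ∈ A i)
    (hσ1 : ∀ i, ∀ a ∈ A₀, dist (h i (σ i a)) a ≤ ε i)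
    (hσ2 : ∀ i, ∀ a ∈ A₀, ∀ b ∈ A₀, |δi i (σ i a) (σ i b) - δ a b| ≤ ε i)
    -- each (A i, δi i) is (C,2,r)-convex in X i
    (hCconv : ∀ i, ∀ w ∈ A i, ∀ x ∈ A i, ∀ y ∈ A i,
      dist x w ≤ r → dist y w ≤ r → δi i x y ≤ dist x y + C * dist x y ^ 3) :
    -- conclusion: (A₀, δ) is (C,2,r/2)-convex in X₀
    ∀ z ∈ A₀, ∀ x ∈ A₀, ∀ y ∈ A₀, dist x z ≤ r / 2 → dist y z ≤ r / 2 →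
      δ x y ≤ dist x y + C * dist x y ^ 3 := by
  intro z hz x hx y hy hxz hyz
  set d := dist x y
  have hcont : Continuous fun t : ℝ => (d + 3 * t) + C * (d + 3 * t) ^ 3 + t := by fun_prop
  have hlim := (hcont.tendsto 0).comp hε
  simp only [Function.comp_def, mul_zero, add_zero] at hlim
  refine ge_of_tendsto hlim ?_
  filter_upwards [hε.eventually_le_const (by positivity : (0 : ℝ) < r / 6)] with i hεi
  exact IsCubicConvex.le_of_approx hC (hCconv i) (hh i).1 (hσmem i) (hσ1 i) (hσ2 i)
    (by linarith) hx hy hz hxz hyz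

/-- `(C,2,r)`-convexity passes to Gromov–Hausdorff limits of subsets:
if `(A i, δi i)` are `(C,2,r)`-convex in `X i`, the `X i` converge to `X₀` via Hausdorff
approximations `h i`, and the subsets `A i` converge to `A₀ ⊆ X₀` compatibly with a
Gromov–Hausdorff convergence `(A i, δi i) → (A₀, δ)` (witnessed by maps `σ i : A₀ → A i`),
then `(A₀, δ)` is `(C,2,r/2)`-convex in `X₀`. -/
theorem stmt_3
    (C r : ℝ) (hC : 0 ≤ C) (hr : 0 < r)
    (X : ℕ → Type*) [∀ i, MetricSpace (X i)]
    (X₀ : Type*) [MetricSpace X₀]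
    (ε : ℕ → ℝ) (hε : Filter.Tendsto ε Filter.atTop (nhds 0))
    (h : ∀ i, X i → X₀)
    (hh : ∀ i, (∀ a b : X i, |dist (h i a) (h i b) - dist a b| ≤ ε i) ∧
      ∀ x : X₀, ∃ a : X i, dist x (h i a) ≤ ε i)
    (A : ∀ i, Set (X i)) (hAne : ∀ i, (A i).Nonempty)
    (A₀ : Set X₀) (hA₀ne : A₀.Nonempty)
    -- the second metrics δi on A i and δ on A₀
    (δi : ∀ i, X i → X i → ℝ) (δ : X₀ → X₀ → ℝ)
    (hδi_nonneg : ∀ i, ∀ x ∈ A i, ∀ y ∈ A i, 0 ≤ δi i x y)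
    (hδi_self : ∀ i, ∀ x ∈ A i, δi i x x = 0)
    (hδi_symm : ∀ i, ∀ x ∈ A i, ∀ y ∈ A i, δi i x y = δi i y x)
    (hδi_tri : ∀ i, ∀ x ∈ A i, ∀ y ∈ A i, ∀ z ∈ A i, δi i x z ≤ δi i x y + δi i y z)
    (hδ_nonneg : ∀ x ∈ A₀, ∀ y ∈ A₀, 0 ≤ δ x y)
    (hδ_self : ∀ x ∈ A₀, δ x x = 0)
    (hδ_symm : ∀ x ∈ A₀, ∀ y ∈ A₀, δ x y = δ y x)
    (hδ_tri : ∀ x ∈ A₀, ∀ y ∈ A₀, ∀ z ∈ A₀, δ x z ≤ δ x y + δ y z)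
    -- the subsets A i converge to A₀ compatibly with a GH-convergence (A i, δi) → (A₀, δ)
    (σ : ∀ i, X₀ → X i)
    (hσmem : ∀ i, ∀ a ∈ A₀, σ i a ∈ A i)
    (hσ1 : ∀ i, ∀ a ∈ A₀, dist (h i (σ i a)) a ≤ ε i)
    (hσ2 : ∀ i, ∀ a ∈ A₀, ∀ b ∈ A₀, |δi i (σ i a) (σ i b) - δ a b| ≤ ε i)
    -- each (A i, δi i) is (C,2,r)-convex in X i
    (hCconv : ∀ i, ∀ w ∈ A i, ∀ x ∈ A i, ∀ y ∈ A i,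
      dist x w ≤ r → dist y w ≤ r → δi i x y ≤ dist x y + C * dist x y ^ 3) :
    -- conclusion: (A₀, δ) is (C,2,r/2)-convex in X₀
    ∀ z ∈ A₀, ∀ x ∈ A₀, ∀ y ∈ A₀, dist x z ≤ r / 2 → dist y z ≤ r / 2 →
      δ x y ≤ dist x y + C * dist x y ^ 3 :=
  stmt_3_general C r hC hr X X₀ ε hε h hh A A₀ δi δ σ hσmem hσ1 hσ2 hCconv
end

section
/- Let X_i, Y_i and Y be metric spaces with diam(X_i) → 0, and let f_i : Y_i → Y be ε_i-Hausdorff approximations with ε_i → 0. Let A_i be a nonempty set which is a subset of both X_i and Y_i (so Z_i := X_i ∪ Y_i with X_i ∩ Y_i = A_i), and suppose Z_i carries a metric d_i satisfying the natural gluing conditions: (a) d_i(x,y) ≤ d_{X_i}(x,y) for x, y ∈ X_i and d_i(y,y') ≤ d_{Y_i}(y,y') for y, y' ∈ Y_i; (b) for all y, y' ∈ Y_i, d_i(y,y') ≥ min( d_{Y_i}(y,y'), infDist_{Y_i}(y, A_i) + infDist_{Y_i}(y', A_i) ); (c) for all x ∈ X_i \ A_i and y ∈ Y_i, d_i(x,y)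 ≥ infDist_{Y_i}(y, A_i). Let A ⊆ Y be a nonempty closed subset with τ_i := (Hausdorff distance in Y between f_i(A_i) and A) → 0. Let Z = Y/A be the quotient metric space, whose points are the points of Y \ A together with one point ⋆ = π(A), with distance ρ(π(y), π(y')) = min( d_Y(y,y'), infDist(y,A) + infDist(y',A) ) and ρ(π(y), ⋆) = infDist(y, A), where π : Y → Y/A is the quotient map. Then the map F_i : Z_i → Z defined by F_i(z) = π(f_i(z)) for z ∈ Y_i and F_i(z) = ⋆ for z ∈ X_i \ A_i is a (diam(X_i) + 2ε_i + 2τ_i)-Hausdorff approximation; in particular Z_i Gromov-Hausdorff converges to Y/A. -/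
/-!
On `Y i` the gluing conditions pin the glued distance between `m = min (dY y y') (φ y + φ y')`
and `m + diam (X i)`, where `φ y` is the `dY`-distance from `y` to `A i`; the quotient distance of
`Y / A` has the same shape, `min (d (f y) (f y')) (ψ y + ψ y')` with `ψ y = infDist (f y) A`.
Since `f i` is an `ε i`-approximation and `f i '' A i` is `τ i`-close to `A`,
`|ψ - φ| ≤ ε i + τ i`, and comparing the two minima term by term gives the bound. A point of
`X i \ A i` is sent to `⋆` and lies within `diam (X i)` of `A i`, which handles the rest.
-/

open Metric

theorem mem_diff_of_union_eq_univ {α : Type*} {X Y A : Set α} (hXY : X ∪ Y = Set.univ)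
    (hAY : A ⊆ Y) {z : α} (hz : z ∉ Y) : z ∈ X \ A :=
  ⟨((hXY.symm ▸ Set.mem_univ z : z ∈ X ∪ Y)).resolve_right hz, fun hzA => hz (hAY hzA)⟩

section InfDist

variable {α β : Type*} [PseudoMetricSpace β]

theorem abs_infDist_sub_infDist_le_of_hausdorffEDist_le {s t : Set β} {τ : ℝ} (p : β)
    (hτ : 0 ≤ τ) (h : hausdorffEDist s t ≤ ENNReal.ofReal τ) :
    |infDist p s - infDist p t| ≤ τ := by
  have hfin : hausdorffEDist s t ≠ ⊤ := ne_top_of_le_ne_top ENNReal.ofReal_ne_top h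
  have hdist : hausdorffDist s t ≤ τ := ENNReal.toReal_le_of_le_ofReal hτ h
  have hst := infDist_le_infDist_add_hausdorffDist (x := p) hfin
  have hts := infDist_le_infDist_add_hausdorffDist (x := p) (by rwa [hausdorffEDist_comm])
  rw [hausdorffDist_comm] at hts
  rw [abs_sub_le_iff]
  constructor <;> linarith

theorem abs_infDist_image_sub_csInf_image_le {f : α → β} {g : α → ℝ} {S : Set α} {p : β}
    {ε : ℝ} (hS : S.Nonempty) (hg : BddBelow (g '' S))
    (h : ∀ a ∈ S, |dist p (f a) - g a| ≤ ε) :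
    |infDist p (f '' S) - sInf (g '' S)| ≤ ε := by
  rw [abs_sub_le_iff]
  constructor
  · suffices infDist p (f '' S) - ε ≤ sInf (g '' S) by linarith
    refine le_csInf (hS.image g) ?_
    rintro _ ⟨a, ha, rfl⟩
    have := infDist_le_dist_of_mem (x := p) (Set.mem_image_of_mem f ha)
    linarith [(abs_le.1 (h a ha)).2]
  · refine sub_le_iff_le_add.2 (le_of_not_gt fun hlt => ?_)
    obtain ⟨_, ⟨a, ha, rfl⟩, hpa⟩ :=
      (infDist_lt_iff (hS.image f)).1 (lt_sub_iff_add_lt'.2 hlt)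
    have := csInf_le hg (Set.mem_image_of_mem g ha)
    linarith [(abs_le.1 (h a ha)).1]

theorem abs_infDist_sub_csInf_image_le {f : α → β} {g : α → ℝ} {S : Set α} {A : Set β}
    {p : β} {ε τ : ℝ} (hS : S.Nonempty) (hg : BddBelow (g '' S))
    (h : ∀ a ∈ S, |dist p (f a) - g a| ≤ ε) (hτ : 0 ≤ τ)
    (hA : hausdorffEDist (f '' S) A ≤ ENNReal.ofReal τ) :
    |infDist p A - sInf (g '' S)| ≤ ε + τ :=
  calc |infDist p A - sInf (g '' S)|
      ≤ |infDist p A - infDist p (f '' S)| + |infDist p (f '' S) - sInf (g '' S)| :=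
        abs_sub_le _ _ _
    _ ≤ τ + ε := by
        gcongr
        · rw [abs_sub_comm]; exact abs_infDist_sub_infDist_le_of_hausdorffEDist_le p hτ hA
        · exact abs_infDist_image_sub_csInf_image_le hS hg h
    _ = ε + τ := add_comm τ ε

noncomputable def quotDist (A : Set β) (p q : β) : ℝ :=
  min (dist p q) (infDist p A + infDist q A)

theorem quotDist_comm (A : Set β) (p q : β) : quotDist A p q = quotDist A q p := by
  rw [quotDist, quotDist, dist_comm, add_comm]

theorem quotDist_le_dist (A : Set β) (p q : β) : quotDist A p q ≤ dist p q :=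
  min_le_left _ _

theorem quotDist_of_mem_right {A : Set β} {a : β} (p : β) (ha : a ∈ A) :
    quotDist A p a = infDist p A := by
  rw [quotDist, infDist_zero_of_mem ha, add_zero]
  exact min_eq_right (infDist_le_dist_of_mem ha)

end InfDist

theorem abs_min_sub_le_add_max {a b a' b' t D ε δ : ℝ} (ht : min a' b' ≤ t)
    (ht' : t ≤ min a' b' + D) (ha : |a - a'| ≤ ε) (hb : |b - b'| ≤ δ) :
    |min a b - t| ≤ D + max ε δ := by
  have h := (abs_min_sub_min_le_max a b a' b').trans (max_le_max ha hb)
  rw [abs_le] at h ⊢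
  constructor <;> linarith

section Gluing

variable {Z : Type*} [PseudoMetricSpace Z] {A : Set Z} {dY : Z → Z → ℝ} {D : ℝ}

theorem bddBelow_image_of_dist_le {y : Z} (hy : ∀ a ∈ A, dist y a ≤ dY y a) :
    BddBelow (dY y '' A) :=
  ⟨0, by rintro _ ⟨a, ha, rfl⟩; exact dist_nonneg.trans (hy a ha)⟩

theorem dist_le_csInf_image_add {z w : Z} (hA : A.Nonempty)
    (hz : ∀ a ∈ A, dist z a ≤ dY z a) (hw : ∀ a ∈ A, dist a w ≤ D) :
    dist z w ≤ sInf (dY z '' A) + D := by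
  suffices dist z w - D ≤ sInf (dY z '' A) by linarith
  refine le_csInf (hA.image _) ?_
  rintro _ ⟨a, ha, rfl⟩
  linarith [dist_triangle z a w, hz a ha, hw a ha]

theorem dist_le_csInf_image_add_csInf_image_add {z w : Z} (hA : A.Nonempty)
    (hz : ∀ a ∈ A, dist z a ≤ dY z a) (hw : ∀ a ∈ A, dist w a ≤ dY w a)
    (hdiam : ∀ a ∈ A, ∀ b ∈ A, dist a b ≤ D) :
    dist z w ≤ sInf (dY z '' A) + sInf (dY w '' A) + D := by
  suffices dist z w - sInf (dY z '' A) - D ≤ sInf (dY w '' A) by linarith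
  refine le_csInf (hA.image _) ?_
  rintro _ ⟨a, ha, rfl⟩
  have hza := dist_le_csInf_image_add hA hz fun b hb => hdiam b hb a ha
  linarith [dist_triangle z a w, dist_comm a w, hw a ha]

theorem dist_le_min_add {z w : Z} (hA : A.Nonempty) (hzw : dist z w ≤ dY z w)
    (hz : ∀ a ∈ A, dist z a ≤ dY z a) (hw : ∀ a ∈ A, dist w a ≤ dY w a)
    (hdiam : ∀ a ∈ A, ∀ b ∈ A, dist a b ≤ D) :
    dist z w ≤ min (dY z w) (sInf (dY z '' A) + sInf (dY w '' A)) + D := by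
  obtain ⟨a, ha⟩ := hA
  have hD : 0 ≤ D := dist_self a ▸ hdiam a ha a ha
  rw [← min_add_add_right]
  exact le_min (by linarith) (dist_le_csInf_image_add_csInf_image_add ⟨a, ha⟩ hz hw hdiam)

theorem abs_min_sub_dist_le {z w : Z} {r s t ε δ : ℝ} (hA : A.Nonempty)
    (hzw : dist z w ≤ dY z w)
    (hzw' : min (dY z w) (sInf (dY z '' A) + sInf (dY w '' A)) ≤ dist z w)
    (hz : ∀ a ∈ A, dist z a ≤ dY z a) (hw : ∀ a ∈ A, dist w a ≤ dY w a)
    (hdiam : ∀ a ∈ A, ∀ b ∈ A, dist a b ≤ D) (ht : |t - dY z w| ≤ ε)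
    (hr : |r - sInf (dY z '' A)| ≤ δ) (hs : |s - sInf (dY w '' A)| ≤ δ) :
    |min t (r + s) - dist z w| ≤ D + max ε (2 * δ) := by
  have hrs : |r + s - (sInf (dY z '' A) + sInf (dY w '' A))| ≤ 2 * δ := by
    rw [add_sub_add_comm, two_mul]
    exact (abs_add_le _ _).trans (add_le_add hr hs)
  exact abs_min_sub_le_add_max hzw' (dist_le_min_add hA hzw hz hw hdiam) ht hrs

theorem abs_sub_dist_le_add_of_abs_sub_csInf_image_le {z w : Z} {r δ : ℝ} (hA : A.Nonempty)
    (hz : ∀ a ∈ A, dist z a ≤ dY z a) (hw : ∀ a ∈ A, dist a w ≤ D)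
    (hzw : sInf (dY z '' A) ≤ dist z w) (hr : |r - sInf (dY z '' A)| ≤ δ) :
    |r - dist z w| ≤ D + δ := by
  have := dist_le_csInf_image_add hA hz hw
  rw [abs_le] at hr ⊢
  constructor <;> linarith

end Gluing

theorem stmt_6_general
    (Z : ℕ → Type*) [∀ i, MetricSpace (Z i)]
    (Y : Type*) [MetricSpace Y]
    (Xi Yi Ai : ∀ i, Set (Z i))
    (hunion : ∀ i, Xi i ∪ Yi i = Set.univ)
    (hinter : ∀ i, Xi i ∩ Yi i = Ai i)
    (hAine : ∀ i, (Ai i).Nonempty)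
    -- metrics dX on the pieces Xi and dY on the pieces Yi
    (dX dY : ∀ i, Z i → Z i → ℝ)
    -- (a) the glued metric is dominated by the piece metrics
    (ha_X : ∀ i, ∀ x ∈ Xi i, ∀ y ∈ Xi i, dist x y ≤ dX i x y)
    (ha_Y : ∀ i, ∀ y ∈ Yi i, ∀ y' ∈ Yi i, dist y y' ≤ dY i y y')
    -- (b) lower bound for the glued metric on Yi
    (hb : ∀ i, ∀ y ∈ Yi i, ∀ y' ∈ Yi i,
      min (dY i y y') (sInf ((dY i y) '' Ai i) + sInf ((dY i y') '' Ai i)) ≤ dist y y')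
    -- (c) lower bound for the glued metric between Xi \ Ai and Yi
    (hc : ∀ i, ∀ x ∈ Xi i \ Ai i, ∀ y ∈ Yi i, sInf ((dY i y) '' Ai i) ≤ dist x y)
    -- diam(Xi i) → 0
    (D : ℕ → ℝ) (hD : ∀ i, ∀ x ∈ Xi i, ∀ y ∈ Xi i, dX i x y ≤ D i)
    -- f i : (Yi i, dY i) → Y is an ε i-Hausdorff approximation, ε i → 0
    (ε : ℕ → ℝ)
    (f : ∀ i, Z i → Y)
    (hf1 : ∀ i, ∀ y ∈ Yi i, ∀ y' ∈ Yi i, |dist (f i y) (f i y') - dY i y y'| ≤ ε i)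
    (hf2 : ∀ i, ∀ p : Y, ∃ y ∈ Yi i, dist p (f i y) ≤ ε i)
    -- A ⊆ Y nonempty closed, with Hausdorff distance (f i '' Ai i, A) ≤ τ i → 0
    (A : Set Y)
    (τ : ℕ → ℝ) (hτ0 : ∀ i, 0 ≤ τ i)
    (hτ : ∀ i, EMetric.hausdorffEdist (f i '' Ai i) A ≤ ENNReal.ofReal (τ i))
    -- the quotient pseudometric ρ representing the metric of Y/A
    (ρ : Y → Y → ℝ)
    (hρ : ∀ y y' : Y, ρ y y' =
      min (dist y y') (Metric.infDist y A + Metric.infDist y' A))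
    -- the point ⋆ = π(A) of the quotient, represented by a point a₀ of A
    (a₀ : Y) (ha₀ : a₀ ∈ A)
    -- the maps F i
    (F : ∀ i, Z i → Y)
    (hF_Y : ∀ i, ∀ z ∈ Yi i, F i z = f i z)
    (hF_X : ∀ i, ∀ z ∈ Xi i \ Ai i, F i z = a₀) :
    -- conclusion: F i is a (D i + 2 ε i + 2 τ i)-Hausdorff approximation to (Y/A, ρ)
    ∀ i, (∀ z w : Z i, |ρ (F i z) (F i w) - dist z w| ≤ D i + 2 * ε i + 2 * τ i) ∧
      (∀ p : Y, ∃ z : Z i, ρ p (F i z) ≤ D i + 2 * ε i + 2 * τ i) := by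
  intro i
  obtain rfl : ρ = quotDist A := funext₂ hρ
  obtain ⟨b, hbA⟩ := hAine i
  obtain ⟨hAX, hAY⟩ : Ai i ⊆ Xi i ∧ Ai i ⊆ Yi i := Set.subset_inter_iff.1 (hinter i).ge
  have hX (z : Z i) (hz : z ∉ Yi i) : z ∈ Xi i \ Ai i :=
    mem_diff_of_union_eq_univ (hunion i) hAY hz
  have hdiam : ∀ x ∈ Xi i, ∀ y ∈ Xi i, dist x y ≤ D i :=
    fun x hx y hy => (ha_X i x hx y hy).trans (hD i x hx y hy)
  have hdA (y : Z i) (hy : y ∈ Yi i) : ∀ a ∈ Ai i, dist y a ≤ dY i y a :=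
    fun a ha => ha_Y i y hy a (hAY ha)
  have hD0 : 0 ≤ D i := dist_self b ▸ hdiam b (hAX hbA) b (hAX hbA)
  have hε0 : 0 ≤ ε i := (abs_nonneg _).trans (hf1 i b (hAY hbA) b (hAY hbA))
  have hψ (y : Z i) (hy : y ∈ Yi i) :
      |infDist (f i y) A - sInf (dY i y '' Ai i)| ≤ ε i + τ i :=
    abs_infDist_sub_csInf_image_le ⟨b, hbA⟩ (bddBelow_image_of_dist_le (hdA y hy))
      (fun a ha => hf1 i y hy a (hAY ha)) (hτ0 i) (hτ i)
  have hYX (z : Z i) (hz : z ∈ Yi i) (w : Z i) (hw : w ∈ Xi i \ Ai i) :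
      |quotDist A (f i z) a₀ - dist z w| ≤ D i + 2 * ε i + 2 * τ i := by
    rw [quotDist_of_mem_right _ ha₀]
    have := abs_sub_dist_le_add_of_abs_sub_csInf_image_le ⟨b, hbA⟩ (hdA z hz)
      (fun a ha => hdiam a (hAX ha) w hw.1) (dist_comm z w ▸ hc i w hw z hz) (hψ z hz)
    linarith [hτ0 i]
  refine ⟨fun z w => ?_, fun p => ?_⟩
  · by_cases hz : z ∈ Yi i <;> by_cases hw : w ∈ Yi i
    · rw [hF_Y i z hz, hF_Y i w hw]
      refine (abs_min_sub_dist_le ⟨b, hbA⟩ (ha_Y i z hz w hw) (hb i z hz w hw) (hdA z hz)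
        (hdA w hw) (fun a ha c hc => hdiam a (hAX ha) c (hAX hc)) (hf1 i z hz w hw) (hψ z hz)
        (hψ w hw)).trans ?_
      linarith [max_le (show ε i ≤ 2 * ε i + 2 * τ i by linarith [hτ0 i])
        (show 2 * (ε i + τ i) ≤ 2 * ε i + 2 * τ i by linarith)]
    · rw [hF_Y i z hz, hF_X i w (hX w hw)]
      exact hYX z hz w (hX w hw)
    · rw [hF_X i z (hX z hz), hF_Y i w hw, quotDist_comm, dist_comm z w]
      exact hYX w hw z (hX z hz)
    · rw [hF_X i z (hX z hz), hF_X i w (hX w hw), quotDist_of_mem_right _ ha₀,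
        infDist_zero_of_mem ha₀, zero_sub, abs_neg, abs_of_nonneg dist_nonneg]
      linarith [hdiam z (hX z hz).1 w (hX w hw).1, hτ0 i]
  · obtain ⟨y, hy, hpy⟩ := hf2 i p
    refine ⟨y, ?_⟩
    rw [hF_Y i y hy]
    linarith [quotDist_le_dist A p (f i y), hτ0 i]

/-- limits of gluings. Let `Z i = X i ∪ Y i` carry a glued metric `d i`
(the ambient `MetricSpace` structure) compatible with metrics `dX i` on `Xi i` and `dY i`
on `Yi i`, glued along `Ai i = Xi i ∩ Yi i`, where `diam(Xi i) → 0` (witnessed by bounds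
`D i → 0`), `f i : (Yi i, dY i) → Y` are `ε i`-Hausdorff approximations with `ε i → 0`,
and `f i '' Ai i → A` in Hausdorff distance (`τ i → 0`) for a nonempty closed `A ⊆ Y`.
Then the map `F i` (equal to `π ∘ f i` on `Yi i` and to the collapsed point `⋆ = π(A)`,
represented by `a₀ ∈ A`, on `Xi i \ Ai i`) is a `(D i + 2 ε i + 2 τ i)`-Hausdorff
approximation from `Z i` to the quotient `Y/A` (whose quotient metric is represented on
`Y` by the pseudometric `ρ`); in particular `Z i` Gromov–Hausdorff converges to `Y/A`. -/
theorem stmt_6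
    (Z : ℕ → Type*) [∀ i, MetricSpace (Z i)]
    (Y : Type*) [MetricSpace Y]
    (Xi Yi Ai : ∀ i, Set (Z i))
    (hunion : ∀ i, Xi i ∪ Yi i = Set.univ)
    (hinter : ∀ i, Xi i ∩ Yi i = Ai i)
    (hAine : ∀ i, (Ai i).Nonempty)
    -- metrics dX on the pieces Xi and dY on the pieces Yi
    (dX dY : ∀ i, Z i → Z i → ℝ)
    (hdX_nonneg : ∀ i, ∀ x ∈ Xi i, ∀ y ∈ Xi i, 0 ≤ dX i x y)
    (hdX_self : ∀ i, ∀ x ∈ Xi i, dX i x x = 0)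
    (hdX_symm : ∀ i, ∀ x ∈ Xi i, ∀ y ∈ Xi i, dX i x y = dX i y x)
    (hdX_tri : ∀ i, ∀ x ∈ Xi i, ∀ y ∈ Xi i, ∀ z ∈ Xi i, dX i x z ≤ dX i x y + dX i y z)
    (hdY_nonneg : ∀ i, ∀ x ∈ Yi i, ∀ y ∈ Yi i, 0 ≤ dY i x y)
    (hdY_self : ∀ i, ∀ x ∈ Yi i, dY i x x = 0)
    (hdY_symm : ∀ i, ∀ x ∈ Yi i, ∀ y ∈ Yi i, dY i x y = dY i y x)
    (hdY_tri : ∀ i, ∀ x ∈ Yi i, ∀ y ∈ Yi i, ∀ z ∈ Yi i, dY i x z ≤ dY i x y + dY i y z)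
    -- (a) the glued metric is dominated by the piece metrics
    (ha_X : ∀ i, ∀ x ∈ Xi i, ∀ y ∈ Xi i, dist x y ≤ dX i x y)
    (ha_Y : ∀ i, ∀ y ∈ Yi i, ∀ y' ∈ Yi i, dist y y' ≤ dY i y y')
    -- (b) lower bound for the glued metric on Yi
    (hb : ∀ i, ∀ y ∈ Yi i, ∀ y' ∈ Yi i,
      min (dY i y y') (sInf ((dY i y) '' Ai i) + sInf ((dY i y') '' Ai i)) ≤ dist y y')
    -- (c) lower bound for the glued metric between Xi \ Ai and Yi
    (hc : ∀ i, ∀ x ∈ Xi i \ Ai i, ∀ y ∈ Yi i, sInf ((dY i y) '' Ai i) ≤ dist x y)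
    -- diam(Xi i) → 0
    (D : ℕ → ℝ) (hD : ∀ i, ∀ x ∈ Xi i, ∀ y ∈ Xi i, dX i x y ≤ D i)
    (hDto : Filter.Tendsto D Filter.atTop (nhds 0))
    -- f i : (Yi i, dY i) → Y is an ε i-Hausdorff approximation, ε i → 0
    (ε : ℕ → ℝ) (hεto : Filter.Tendsto ε Filter.atTop (nhds 0))
    (f : ∀ i, Z i → Y)
    (hf1 : ∀ i, ∀ y ∈ Yi i, ∀ y' ∈ Yi i, |dist (f i y) (f i y') - dY i y y'| ≤ ε i)
    (hf2 : ∀ i, ∀ p : Y, ∃ y ∈ Yi i, dist p (f i y) ≤ ε i)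
    -- A ⊆ Y nonempty closed, with Hausdorff distance (f i '' Ai i, A) ≤ τ i → 0
    (A : Set Y) (hAne : A.Nonempty) (hAcl : IsClosed A)
    (τ : ℕ → ℝ) (hτ0 : ∀ i, 0 ≤ τ i) (hτto : Filter.Tendsto τ Filter.atTop (nhds 0))
    (hτ : ∀ i, EMetric.hausdorffEdist (f i '' Ai i) A ≤ ENNReal.ofReal (τ i))
    -- the quotient pseudometric ρ representing the metric of Y/A
    (ρ : Y → Y → ℝ)
    (hρ : ∀ y y' : Y, ρ y y' =
      min (dist y y') (Metric.infDist y A + Metric.infDist y' A))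
    -- the point ⋆ = π(A) of the quotient, represented by a point a₀ of A
    (a₀ : Y) (ha₀ : a₀ ∈ A)
    -- the maps F i
    (F : ∀ i, Z i → Y)
    (hF_Y : ∀ i, ∀ z ∈ Yi i, F i z = f i z)
    (hF_X : ∀ i, ∀ z ∈ Xi i \ Ai i, F i z = a₀) :
    -- conclusion: F i is a (D i + 2 ε i + 2 τ i)-Hausdorff approximation to (Y/A, ρ)
    ∀ i, (∀ z w : Z i, |ρ (F i z) (F i w) - dist z w| ≤ D i + 2 * ε i + 2 * τ i) ∧
      (∀ p : Y, ∃ z : Z i, ρ p (F i z) ≤ D i + 2 * ε i + 2 * τ i) :=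
  stmt_6_general Z Y Xi Yi Ai hunion hinter hAine dX dY ha_X ha_Y hb hc D hD ε f hf1 hf2 A τ hτ0 hτ
    ρ hρ a₀ ha₀ F hF_Y hF_X
end

section
/- Let (Z, d_Z) be a metric space, let M ⊆ Z be a subset equipped with a metric d_M such that d_Z(x,y) ≤ d_M(x,y) for all x, y ∈ M, and suppose the d_M-diameter of M is at most d. Let 0 < ε ≤ 1 and t₀ ≥ 0, and let π : Z → M be a map such that π(x) = x for every x ∈ M, d_Z(x, π(x)) ≤ t₀ for every x ∈ Z, and d_M(π(x), π(y)) ≤ (1/ε)·d_Z(x,y) for all x, y ∈ Z. Then π : (Z, d_Z) → (M, d_M) is a max{ 2t₀, (1/ε − 1)(d + 2t₀) }-Hausdorff approximation. -/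
theorem dist_le_dist_add_two_mul_of_forall_dist_le {Z : Type*} [PseudoMetricSpace Z]
    {f : Z → Z} {t : ℝ} (hf : ∀ z, dist z (f z) ≤ t) (x y : Z) :
    dist x y ≤ dist (f x) (f y) + 2 * t := by
  have := dist_triangle4 x (f x) (f y) y
  linarith [hf x, hf y, dist_comm (f y) y]

theorem abs_sub_le_max_of_le_add_of_le_mul {a b t K d : ℝ} (hlow : b ≤ a + t) (hup : a ≤ K * b)
    (hK : 1 ≤ K) (ha : a ≤ d) : |a - b| ≤ max t ((K - 1) * (d + t)) := by
  have hstretch : (K - 1) * b ≤ (K - 1) * (d + t) :=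
    mul_le_mul_of_nonneg_left (by linarith) (by linarith)
  rw [abs_le]
  constructor
  · linarith [le_max_left t ((K - 1) * (d + t))]
  · linarith [le_max_right t ((K - 1) * (d + t))]

theorem stmt_7_general
    (Z : Type*) [MetricSpace Z]
    (M : Set Z) (dM : Z → Z → ℝ)
    (hdM_self : ∀ x ∈ M, dM x x = 0)
    -- the ambient distance is dominated by dM on M
    (hle : ∀ x ∈ M, ∀ y ∈ M, dist x y ≤ dM x y)
    -- dM-diameter of M is at most d
    (d : ℝ) (hdiam : ∀ x ∈ M, ∀ y ∈ M, dM x y ≤ d)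
    (ε t₀ : ℝ) (hε0 : 0 < ε) (hε1 : ε ≤ 1) (ht₀ : 0 ≤ t₀)
    (pr : Z → Z)
    (hmem : ∀ z : Z, pr z ∈ M)
    (hid : ∀ x ∈ M, pr x = x)
    (hmove : ∀ z : Z, dist z (pr z) ≤ t₀)
    (hlip : ∀ x y : Z, dM (pr x) (pr y) ≤ (1 / ε) * dist x y) :
    (∀ x y : Z, |dM (pr x) (pr y) - dist x y| ≤ max (2 * t₀) ((1 / ε - 1) * (d + 2 * t₀))) ∧
    (∀ m ∈ M, ∃ z : Z, dM m (pr z) ≤ max (2 * t₀) ((1 / ε - 1) * (d + 2 * t₀))) := by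
  refine ⟨fun x y => ?_, fun m hm => ⟨m, ?_⟩⟩
  · refine abs_sub_le_max_of_le_add_of_le_mul ?_ (hlip x y) (one_le_one_div hε0 hε1)
      (hdiam _ (hmem x) _ (hmem y))
    calc dist x y ≤ dist (pr x) (pr y) + 2 * t₀ :=
          dist_le_dist_add_two_mul_of_forall_dist_le hmove x y
      _ ≤ dM (pr x) (pr y) + 2 * t₀ := by gcongr; exact hle _ (hmem x) _ (hmem y)
  · rw [hid m hm, hdM_self m hm]
    exact le_max_of_le_left (by positivity)

/-- A projection `pr : Z → M` which is the identity on `M`, moves points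
by at most `t₀`, and is `(1/ε)`-Lipschitz into the intrinsic metric `dM` of `M`
(which dominates the ambient metric and has `dM`-diameter at most `d`), is a
`max{2t₀, (1/ε − 1)(d + 2t₀)}`-Hausdorff approximation from `(Z, d_Z)` to `(M, dM)`. -/
theorem stmt_7
    (Z : Type*) [MetricSpace Z]
    (M : Set Z) (dM : Z → Z → ℝ)
    -- dM is a metric on M
    (hdM_nonneg : ∀ x ∈ M, ∀ y ∈ M, 0 ≤ dM x y)
    (hdM_self : ∀ x ∈ M, dM x x = 0)
    (hdM_symm : ∀ x ∈ M, ∀ y ∈ M, dM x y = dM y x)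
    (hdM_tri : ∀ x ∈ M, ∀ y ∈ M, ∀ z ∈ M, dM x z ≤ dM x y + dM y z)
    -- the ambient distance is dominated by dM on M
    (hle : ∀ x ∈ M, ∀ y ∈ M, dist x y ≤ dM x y)
    -- dM-diameter of M is at most d
    (d : ℝ) (hdiam : ∀ x ∈ M, ∀ y ∈ M, dM x y ≤ d)
    (ε t₀ : ℝ) (hε0 : 0 < ε) (hε1 : ε ≤ 1) (ht₀ : 0 ≤ t₀)
    (pr : Z → Z)
    (hmem : ∀ z : Z, pr z ∈ M)
    (hid : ∀ x ∈ M, pr x = x)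
    (hmove : ∀ z : Z, dist z (pr z) ≤ t₀)
    (hlip : ∀ x y : Z, dM (pr x) (pr y) ≤ (1 / ε) * dist x y) :
    (∀ x y : Z, |dM (pr x) (pr y) - dist x y| ≤ max (2 * t₀) ((1 / ε - 1) * (d + 2 * t₀))) ∧
    (∀ m ∈ M, ∃ z : Z, dM m (pr z) ≤ max (2 * t₀) ((1 / ε - 1) * (d + 2 * t₀))) :=
  stmt_7_general Z M dM hdM_self hle d hdiam ε t₀ hε0 hε1 ht₀ pr hmem hid hmove hlip
end

section
/- For every λ̄ ≤ 0, every t₀ > 0 and every ε with 0 < ε < 1, there exist a real number K and a C^∞ function φ : [0, t₀] → ℝ which is monotone non-increasing and satisfies: φ''(t) + K·φ(t) ≤ 0 for all t ∈ [0, t₀], φ(0) = 1, −∞ < φ'(0) ≤ λ̄, φ(t₀) = ε, and φ'(t₀) = 0 (hence ε ≤ φ(t) ≤ 1 for all t). -/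
/-- For every `λ̄ ≤ 0`, `t₀ > 0` and `0 < ε < 1` there exist `K ∈ ℝ` and a
`C^∞` monotone non-increasing function `φ` on `[0, t₀]` with `φ'' + Kφ ≤ 0`, `φ(0) = 1`,
`φ'(0) ≤ λ̄`, `φ(t₀) = ε`, `φ'(t₀) = 0` (hence `ε ≤ φ ≤ 1`). -/
theorem stmt_8 (lam t₀ ε : ℝ) (hlam : lam ≤ 0) (ht₀ : 0 < t₀) (hε0 : 0 < ε) (hε1 : ε < 1) :
    ∃ (K : ℝ) (φ : ℝ → ℝ), ContDiff ℝ (⊤ : ℕ∞) φ ∧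
      AntitoneOn φ (Set.Icc 0 t₀) ∧
      (∀ t ∈ Set.Icc 0 t₀, deriv (deriv φ) t + K * φ t ≤ 0) ∧
      φ 0 = 1 ∧
      deriv φ 0 ≤ lam ∧
      φ t₀ = ε ∧
      deriv φ t₀ = 0 ∧
      ∀ t ∈ Set.Icc 0 t₀, ε ≤ φ t ∧ φ t ≤ 1 := by
  set c : ℝ := 1 - ε with hc
  have hcpos : 0 < c := by simp [hc]; linarith
  set n : ℕ := max 2 ⌈(-lam) * t₀ / c⌉₊ with hn
  have hn2 : 2 ≤ n := le_max_left _ _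
  set φ : ℝ → ℝ := fun t => ε + c * (1 - t / t₀) ^ n with hφdef
  -- derivative
  have hder : ∀ t : ℝ, HasDerivAt φ (c * (n * (1 - t / t₀) ^ (n - 1) * (-(1 / t₀)))) t := by
    intro t
    have h1 : HasDerivAt (fun t : ℝ => 1 - t / t₀) (-(1 / t₀)) t := by
      simpa using ((hasDerivAt_id t).div_const t₀).const_sub 1
    have h2 := (h1.pow n).const_mul c
    exact h2.const_add ε
  have hderiv : ∀ t : ℝ, deriv φ t = c * (n * (1 - t / t₀) ^ (n - 1) * (-(1 / t₀))) :=
    fun t => (hder t).deriv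
  have hsmooth : ContDiff ℝ (⊤ : ℕ∞) φ :=
    contDiff_const.add (contDiff_const.mul ((contDiff_const.sub (contDiff_id.div_const t₀)).pow n))
  -- second derivative continuity and bound
  have hsm2 : Continuous (deriv (deriv φ)) := by
    have h1 : ContDiff ℝ ((⊤:ℕ∞) : WithTop ℕ∞) φ := hsmooth.of_le (by simp)
    have h2 := h1.iterate_deriv 2
    have he : deriv^[2] φ = deriv (deriv φ) := by
      simp [Function.iterate_succ, Function.comp_def]
    rw [he] at h2
    exact h2.continuous
  obtain ⟨C, hC⟩ := (isCompact_Icc (a := (0:ℝ)) (b := t₀)).exists_bound_of_continuousOn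
    hsm2.continuousOn
  have hC0 : 0 ≤ C := le_trans (norm_nonneg _) (hC 0 ⟨le_refl _, le_of_lt ht₀⟩)
  refine ⟨-(C / ε), φ, hsmooth, ?_, ?_, ?_, ?_, ?_, ?_, ?_⟩
  · -- antitone
    intro a ha b hb hab
    have hub : (0:ℝ) ≤ 1 - b / t₀ := by
      have : b / t₀ ≤ 1 := (div_le_one ht₀).mpr hb.2
      linarith
    have hord : 1 - b / t₀ ≤ 1 - a / t₀ := by
      have : a / t₀ ≤ b / t₀ := by gcongr
      linarith
    have := pow_le_pow_left₀ hub hord n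
    simp only [hφdef]
    nlinarith [hcpos]
  · -- differential inequality
    intro t ht
    have h1 : deriv (deriv φ) t ≤ C := le_trans (le_abs_self _) (hC t ht)
    have h2 : ε ≤ φ t := by
      have hut : (0:ℝ) ≤ 1 - t / t₀ := by
        have : t / t₀ ≤ 1 := (div_le_one ht₀).mpr ht.2
        linarith
      have : 0 ≤ c * (1 - t / t₀) ^ n := by positivity
      simp only [hφdef]; linarith
    have h3 : -(C / ε) * φ t ≤ -(C / ε) * ε := by
      apply mul_le_mul_of_nonpos_left h2
      have : 0 ≤ C / ε := div_nonneg hC0 hε0.le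
      linarith
    have h4 : -(C / ε) * ε = -C := by field_simp
    linarith
  · simp only [hφdef]; norm_num; linarith
  · -- deriv at 0
    rw [hderiv 0]
    have hle : (-lam) * t₀ / c ≤ (n : ℝ) := by
      calc (-lam) * t₀ / c ≤ (⌈(-lam) * t₀ / c⌉₊ : ℝ) := Nat.le_ceil _
        _ ≤ (n : ℝ) := by exact_mod_cast le_max_right _ _
    rw [div_le_iff₀ hcpos] at hle
    have : c * ((n:ℝ) * (1 - 0 / t₀) ^ (n-1) * (-(1/t₀))) = -(c * n / t₀) := by
      simp; ring
    rw [this]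
    rw [neg_le_iff_add_nonneg]
    have h5 : (-lam) * t₀ ≤ (n:ℝ) * c := hle
    have : -lam ≤ c * n / t₀ := by
      rw [le_div_iff₀ ht₀]; nlinarith
    linarith
  · -- φ t₀ = ε
    simp [hφdef, div_self ht₀.ne', zero_pow (by omega : n ≠ 0)]
  · -- deriv at t₀
    rw [hderiv t₀]
    have : (1 : ℝ) - t₀ / t₀ = 0 := by rw [div_self ht₀.ne']; ring
    rw [this, zero_pow (by omega : n - 1 ≠ 0)]
    ring
  · -- bounds
    intro t ht
    have hut : (0:ℝ) ≤ 1 - t / t₀ := by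
      have : t / t₀ ≤ 1 := (div_le_one ht₀).mpr ht.2
      linarith
    have hut1 : 1 - t / t₀ ≤ 1 := by
      have : 0 ≤ t / t₀ := div_nonneg ht.1 ht₀.le
      linarith
    have hp1 : (1 - t / t₀) ^ n ≤ 1 := pow_le_one₀ hut hut1
    have hp0 : 0 ≤ (1 - t / t₀) ^ n := pow_nonneg hut n
    constructor
    · simp only [hφdef]; nlinarith
    · simp only [hφdef]; nlinarith
end

section
/- Let λ̄ < 0, t₀ > 0 and 0 < ε < 1, and define φ : [0, t₀) → ℝ by φ(t) = (1 − ε)·exp[ (λ̄ t₀² / (1 − ε)) · ( 1/(t₀ − t) − 1/t₀ ) ] + ε. If |λ̄| t₀ / (1 − ε) > 6/(3 − √3), then for every t ∈ [0, t₀): −φ''(t)/φ(t) ≥ min{ 0, −(1/ε)·( 2λ̄/t₀ + λ̄²/(1 − ε) ) }. -/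
/-!
Put `a = λ̄t₀²/(1 − ε)` and `X = −a/(t₀ − t)`. Then
`φ''(t) = (1 − ε) e^{−a/t₀} a⁻² · (X⁴ − 2X³) e^{−X}`,
and `X` increases from `X(0) = |λ̄|t₀/(1 − ε)`.
Since `6/(3 − √3) = 3 + √3` is the largest critical point of `(X⁴ − 2X³) e^{−X}`, this profile
decreases along `[X(0), ∞)`, so `φ''(t) ≤ φ''(0) = 2λ̄/t₀ + λ̄²/(1 − ε)`. Together with `φ ≥ ε`
this gives the bound.
-/

open Real Set Filter Topology

noncomputable def quarticMulExpNeg (x : ℝ) : ℝ := (x ^ 4 - 2 * x ^ 3) * exp (-x)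

lemma antitoneOn_quarticMulExpNeg : AntitoneOn quarticMulExpNeg (Ici (3 + √3)) := by
  have hderiv : ∀ x : ℝ,
      HasDerivAt quarticMulExpNeg (-(x ^ 2 * ((x - 3) ^ 2 - 3)) * exp (-x)) x := by
    intro x
    have hpoly : HasDerivAt (fun x : ℝ => x ^ 4 - 2 * x ^ 3) (4 * x ^ 3 - 2 * (3 * x ^ 2)) x :=
      (hasDerivAt_pow 4 x).sub ((hasDerivAt_pow 3 x).const_mul 2)
    refine (hpoly.fun_mul (hasDerivAt_neg x).exp).congr_deriv ?_
    ring
  refine antitoneOn_of_deriv_nonpos (convex_Ici _)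
    (fun x _ => (hderiv x).continuousAt.continuousWithinAt)
    (fun x _ => (hderiv x).differentiableAt.differentiableWithinAt) fun x hx => ?_
  rw [interior_Ici, mem_Ioi] at hx
  rw [(hderiv x).deriv]
  have hsq : √3 ^ 2 = 3 := sq_sqrt (by norm_num)
  have hroot : 3 ≤ (x - 3) ^ 2 := by nlinarith [sqrt_nonneg 3]
  have hfactor := mul_nonneg (sq_nonneg x) (sub_nonneg.mpr hroot)
  nlinarith [exp_pos (-x)]

lemma six_div_three_sub_sqrt_three : 6 / (3 - √3) = 3 + √3 := by
  have hsq : √3 ^ 2 = 3 := sq_sqrt (by norm_num)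
  have hlt : √3 < 3 := by nlinarith [sqrt_nonneg 3]
  rw [div_eq_iff (by linarith)]
  linear_combination hsq

lemma min_zero_neg_div_le {ε p x B : ℝ} (hε : 0 < ε) (hp : ε ≤ p) (hx : x ≤ B) :
    min 0 (-(1 / ε) * B) ≤ -x / p := by
  have hp0 : 0 < p := hε.trans_le hp
  rcases le_or_gt x 0 with hx0 | hx0
  · exact (min_le_left _ _).trans (div_nonneg (neg_nonneg.mpr hx0) hp0.le)
  · refine (min_le_right _ _).trans ?_
    have : x / p ≤ B / ε := div_le_div₀ (hx0.le.trans hx) hx hε hp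
    calc -(1 / ε) * B = -(B / ε) := by ring
      _ ≤ -(x / p) := neg_le_neg this
      _ = -x / p := (neg_div _ _).symm

noncomputable def expWarp (a t₀ s : ℝ) : ℝ := exp (a * (1 / (t₀ - s) - 1 / t₀))

section expWarp

variable {a t₀ s : ℝ}

lemma hasDerivAt_expWarp (hs : s ≠ t₀) :
    HasDerivAt (expWarp a t₀) (expWarp a t₀ s * (a / (t₀ - s) ^ 2)) s := by
  have hne : t₀ - s ≠ 0 := sub_ne_zero.mpr hs.symm
  have hinv := ((hasDerivAt_id s).const_sub t₀).inv hne
  convert ((hinv.sub_const t₀⁻¹).const_mul a).exp using 1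
  · ext u; simp [expWarp]
  · simp only [expWarp, one_div, Pi.inv_apply, id]
    ring

lemma deriv_expWarp_eventuallyEq (hs : s ≠ t₀) :
    deriv (expWarp a t₀) =ᶠ[𝓝 s] fun u => expWarp a t₀ u * (a / (t₀ - u) ^ 2) := by
  filter_upwards [isOpen_ne.mem_nhds hs] with u hu
  exact (hasDerivAt_expWarp hu).deriv

lemma deriv_deriv_expWarp (hs : s ≠ t₀) :
    deriv (deriv (expWarp a t₀)) s =
      expWarp a t₀ s * (a ^ 2 / (t₀ - s) ^ 4 + 2 * a / (t₀ - s) ^ 3) := by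
  have hne : t₀ - s ≠ 0 := sub_ne_zero.mpr hs.symm
  have hfactor : HasDerivAt (fun u => a / (t₀ - u) ^ 2) (2 * a / (t₀ - s) ^ 3) s := by
    refine ((hasDerivAt_const s a).fun_div (((hasDerivAt_id s).const_sub t₀).fun_pow 2)
      (pow_ne_zero 2 hne)).congr_deriv ?_
    simp only [id]
    field_simp
    ring
  rw [(deriv_expWarp_eventuallyEq hs).deriv_eq, ((hasDerivAt_expWarp hs).fun_mul hfactor).deriv]
  field_simp

lemma expWarp_mul_eq (ha : a ≠ 0) (hs : s ≠ t₀) :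
    expWarp a t₀ s * (a ^ 2 / (t₀ - s) ^ 4 + 2 * a / (t₀ - s) ^ 3) =
      exp (-a / t₀) / a ^ 2 * quarticMulExpNeg (-a / (t₀ - s)) := by
  have hne : t₀ - s ≠ 0 := sub_ne_zero.mpr hs.symm
  have hsplit : expWarp a t₀ s = exp (-a / t₀) * exp (-(-a / (t₀ - s))) := by
    rw [expWarp, ← exp_add]
    ring_nf
  rw [hsplit, quarticMulExpNeg]
  field_simp
  ring

lemma deriv_deriv_expWarp_le (hs₀ : 0 ≤ s) (hst : s < t₀) (hbig : 3 + √3 ≤ -a / t₀) :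
    deriv (deriv (expWarp a t₀)) s ≤ a ^ 2 / t₀ ^ 4 + 2 * a / t₀ ^ 3 := by
  have ht₀ : 0 < t₀ := hs₀.trans_lt hst
  have hpos : 0 < t₀ - s := sub_pos.mpr hst
  have ha : a < 0 := neg_pos.mp <| (div_pos_iff_of_pos_right ht₀).mp <|
    lt_of_lt_of_le (by positivity) hbig
  have hX : -a / t₀ ≤ -a / (t₀ - s) := div_le_div_of_nonneg_left (by linarith) hpos (by linarith)
  have hprofile_zero :
      exp (-a / t₀) / a ^ 2 * quarticMulExpNeg (-a / t₀) = a ^ 2 / t₀ ^ 4 + 2 * a / t₀ ^ 3 := by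
    simpa [expWarp] using (expWarp_mul_eq (s := 0) ha.ne ht₀.ne).symm
  calc deriv (deriv (expWarp a t₀)) s
      = exp (-a / t₀) / a ^ 2 * quarticMulExpNeg (-a / (t₀ - s)) := by
        rw [deriv_deriv_expWarp hst.ne, expWarp_mul_eq ha.ne hst.ne]
    _ ≤ exp (-a / t₀) / a ^ 2 * quarticMulExpNeg (-a / t₀) :=
        mul_le_mul_of_nonneg_left (antitoneOn_quarticMulExpNeg hbig (hbig.trans hX) hX)
          (by positivity)
    _ = a ^ 2 / t₀ ^ 4 + 2 * a / t₀ ^ 3 := hprofile_zero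

end expWarp

/-- Lower bound for the radial curvatures `−φ''/φ` of the explicit
warping function: if `|λ̄|t₀/(1−ε) > 6/(3 − √3)` then for all `t ∈ [0, t₀)`,
`−φ''(t)/φ(t) ≥ min{0, −(1/ε)(2λ̄/t₀ + λ̄²/(1−ε))}`. -/
theorem stmt_10 (lam t₀ ε : ℝ) (hlam : lam < 0) (ht₀ : 0 < t₀) (hε0 : 0 < ε) (hε1 : ε < 1)
    (φ : ℝ → ℝ)
    (hφ : ∀ t, φ t =
      (1 - ε) * Real.exp ((lam * t₀ ^ 2 / (1 - ε)) * (1 / (t₀ - t) - 1 / t₀)) + ε)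
    (hbig : |lam| * t₀ / (1 - ε) > 6 / (3 - Real.sqrt 3)) :
    ∀ t ∈ Set.Ico 0 t₀,
      min 0 (-(1 / ε) * (2 * lam / t₀ + lam ^ 2 / (1 - ε))) ≤ -(deriv (deriv φ) t) / φ t := by
  rintro t ⟨ht0, htt⟩
  set a := lam * t₀ ^ 2 / (1 - ε) with ha
  have h1ε : 0 < 1 - ε := sub_pos.mpr hε1
  have hφ' : φ = fun t => (1 - ε) * expWarp a t₀ t + ε := funext hφ
  have hX₀ : 3 + √3 ≤ -a / t₀ := by
    have hX₀_eq : -a / t₀ = |lam| * t₀ / (1 - ε) := by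
      rw [ha, abs_of_neg hlam]
      field_simp
    rw [hX₀_eq, ← six_div_three_sub_sqrt_three]
    exact hbig.le
  have hsecond : deriv (deriv φ) t = (1 - ε) * deriv (deriv (expWarp a t₀)) t := by
    rw [hφ', deriv_add_const', deriv_const_mul_field', deriv_const_mul_field']
  have hB : (1 - ε) * (a ^ 2 / t₀ ^ 4 + 2 * a / t₀ ^ 3) = 2 * lam / t₀ + lam ^ 2 / (1 - ε) := by
    rw [ha]
    field_simp
    ring
  have hεφ : ε ≤ φ t := by
    rw [hφ t]
    nlinarith [exp_pos (a * (1 / (t₀ - t) - 1 / t₀))]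
  refine min_zero_neg_div_le hε0 hεφ ?_
  rw [hsecond, ← hB]
  exact mul_le_mul_of_nonneg_left (deriv_deriv_expWarp_le ht0 htt hX₀) h1ε.le
end

section
/- Let λ̄ < 0, t₀ > 0 and 0 < ε < 1, and define φ : [0, t₀) → ℝ by φ(t) = (1 − ε)·exp[ (λ̄ t₀² / (1 − ε)) · ( 1/(t₀ − t) − 1/t₀ ) ] + ε. If |λ̄| t₀ / (1 − ε) > 2, then |φ'(t)| ≤ |λ̄| for every t ∈ [0, t₀). -/
/-!
Write `u = t₀ / (t₀ - t) ≥ 1` and `K = |λ̄| t₀ / (1 - ε) > 2`. Then `φ'(t) = λ̄ u² e^{-K (u - 1)}`,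
and `u ≤ e^{u - 1}` gives `u² ≤ e^{2 (u - 1)} ≤ e^{K (u - 1)}`.
-/

open Real

theorem sq_le_exp_mul_sub_one {u K : ℝ} (hu : 1 ≤ u) (hK : 2 ≤ K) :
    u ^ 2 ≤ exp (K * (u - 1)) :=
  calc u ^ 2 ≤ exp (u - 1) ^ 2 := by
        gcongr
        linarith [add_one_le_exp (u - 1)]
    _ = exp (2 * (u - 1)) := by rw [← exp_nat_mul]; norm_num
    _ ≤ exp (K * (u - 1)) := by gcongr

theorem sq_mul_exp_neg_mul_sub_one_le_one {u K : ℝ} (hu : 1 ≤ u) (hK : 2 ≤ K) :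
    u ^ 2 * exp (-(K * (u - 1))) ≤ 1 := by
  rw [exp_neg, ← div_eq_mul_inv, div_le_one (exp_pos _)]
  exact sq_le_exp_mul_sub_one hu hK

theorem hasDerivAt_exp_mul_inv_sub (a b c t₀ : ℝ) {t : ℝ} (ht : t ≠ t₀) :
    HasDerivAt (fun s => a * exp (c * (1 / (t₀ - s) - 1 / t₀)) + b)
      (a * c / (t₀ - t) ^ 2 * exp (c * (1 / (t₀ - t) - 1 / t₀))) t := by
  have hinv : HasDerivAt (fun s => 1 / (t₀ - s)) (1 / (t₀ - t) ^ 2) t := by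
    simpa [one_div, neg_div] using
      ((hasDerivAt_id t).const_sub t₀).fun_inv (sub_ne_zero.mpr ht.symm)
  exact ((((hinv.sub_const (1 / t₀)).const_mul c).exp.const_mul a).add_const b).congr_deriv
    (by ring)

theorem stmt_11_general (lam t₀ ε : ℝ) (hlam : lam < 0) (hε1 : ε < 1)
    (φ : ℝ → ℝ)
    (hφ : ∀ t, φ t =
      (1 - ε) * Real.exp ((lam * t₀ ^ 2 / (1 - ε)) * (1 / (t₀ - t) - 1 / t₀)) + ε)
    (hbig : |lam| * t₀ / (1 - ε) > 2) :
    ∀ t ∈ Set.Ico 0 t₀, |deriv φ t| ≤ |lam| := by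
  rintro t ⟨ht0, htt₀⟩
  have hε : 1 - ε ≠ 0 := by linarith
  have hd : t₀ - t ≠ 0 := by linarith
  have ht₀ : t₀ ≠ 0 := by linarith
  set u := t₀ / (t₀ - t)
  set K := |lam| * t₀ / (1 - ε)
  have hu : 1 ≤ u := by rw [le_div_iff₀ (by linarith)]; linarith
  have hcoef : (1 - ε) * (lam * t₀ ^ 2 / (1 - ε)) / (t₀ - t) ^ 2 = lam * u ^ 2 := by
    simp only [u]
    field_simp
  have hexponent : lam * t₀ ^ 2 / (1 - ε) * (1 / (t₀ - t) - 1 / t₀) = -(K * (u - 1)) := by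
    simp only [u, K, abs_of_neg hlam]
    field_simp
  have hderiv : deriv φ t = lam * (u ^ 2 * exp (-(K * (u - 1)))) := by
    rw [funext hφ, (hasDerivAt_exp_mul_inv_sub _ _ _ _ htt₀.ne).deriv, hcoef, hexponent, mul_assoc]
  rw [hderiv, abs_mul, abs_of_nonneg (by positivity : 0 ≤ u ^ 2 * exp (-(K * (u - 1))))]
  exact mul_le_of_le_one_right (abs_nonneg _) (sq_mul_exp_neg_mul_sub_one_le_one hu hbig.le)

/-- Uniform derivative bound for the explicit warping function: if
`|λ̄|t₀/(1−ε) > 2` then `|φ'(t)| ≤ |λ̄|` for every `t ∈ [0, t₀)`. -/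
theorem stmt_11 (lam t₀ ε : ℝ) (hlam : lam < 0) (ht₀ : 0 < t₀) (hε0 : 0 < ε) (hε1 : ε < 1)
    (φ : ℝ → ℝ)
    (hφ : ∀ t, φ t =
      (1 - ε) * Real.exp ((lam * t₀ ^ 2 / (1 - ε)) * (1 / (t₀ - t) - 1 / t₀)) + ε)
    (hbig : |lam| * t₀ / (1 - ε) > 2) :
    ∀ t ∈ Set.Ico 0 t₀, |deriv φ t| ≤ |lam| :=
  stmt_11_general lam t₀ ε hlam hε1 φ hφ hbig
end
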